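/- Let Ψ ⊆ ℝ₊^{n×n} be compact. Then there exist 1 ≤ k ≤ n and matrices A₁,…,A_k ∈ Ψ such that μ(Ψ) = μ(A_k ⊗ ⋯ ⊗ A₁)^{1/k}, i.e., the max-algebraic joint spectral radius is attained by a product of length at most n (finiteness property). -/
import Mathlib


open scoped BigOperators

namespace MaxAlg

variable {n : ℕ}

/-- max-algebraic matrix product: (A ⊗ B) i j = max_k A i k * B k j -/
noncomputable def maxMul (A B : Fin n → Fin n → ℝ) : Fin n → Fin n → ℝ :=
  fun i j => ⨆ k : Fin n, A i k * B k j

/-- max-algebraic matrix-vector product -/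
noncomputable def maxVec (A : Fin n → Fin n → ℝ) (x : Fin n → ℝ) : Fin n → ℝ :=
  fun i => ⨆ j : Fin n, A i j * x j

/-- the identity matrix -/
def idMat (n : ℕ) : Fin n → Fin n → ℝ := fun i j => if i = j then 1 else 0

/-- maximal cycle geometric mean: max over simple cycles of the geometric
mean of the corresponding entries -/
noncomputable def mu (A : Fin n → Fin n → ℝ) : ℝ :=
  ⨆ k : Fin n, ⨆ c : {f : Fin (k.1 + 1) → Fin n // Function.Injective f},
    (∏ j : Fin (k.1 + 1), A (c.1 j) (c.1 (j + 1))) ^ ((1 : ℝ) / ((k.1 : ℝ) + 1))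

/-- entrywise supremum S(Ψ) of a set of matrices -/
noncomputable def Ssup (Ψ : Set (Fin n → Fin n → ℝ)) : Fin n → Fin n → ℝ :=
  fun i j => sSup ((fun A => A i j) '' Ψ)

/-- max-algebraic joint spectral radius, via μ(Ψ) = μ(S(Ψ)) -/
noncomputable def muSet (Ψ : Set (Fin n → Fin n → ℝ)) : ℝ := mu (Ssup Ψ)

/-- irreducibility of a nonnegative matrix -/
def Irred (A : Fin n → Fin n → ℝ) : Prop :=
  ∀ I : Set (Fin n), I.Nonempty → I ≠ Set.univ → ∃ i ∈ I, ∃ j, j ∉ I ∧ A i j ≠ 0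

/-- max-convex hull: finite combinations ⊕ αᵢ Aᵢ with αᵢ ≥ 0 and max αᵢ = 1 -/
def maxConv (M : Set (Fin n → Fin n → ℝ)) : Set (Fin n → Fin n → ℝ) :=
  {B | ∃ (k : ℕ) (α : Fin (k + 1) → ℝ) (A : Fin (k + 1) → (Fin n → Fin n → ℝ)),
    (∀ i, 0 ≤ α i) ∧ (∀ i, A i ∈ M) ∧ (⨆ i, α i) = 1 ∧
    B = fun i j => ⨆ l, α l * A l i j}

/-- max-span (max cone): finite combinations ⊕ αᵢ Aᵢ with αᵢ ≥ 0 -/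
def maxSpan (M : Set (Fin n → Fin n → ℝ)) : Set (Fin n → Fin n → ℝ) :=
  {B | ∃ (k : ℕ) (α : Fin (k + 1) → ℝ) (A : Fin (k + 1) → (Fin n → Fin n → ℝ)),
    (∀ i, 0 ≤ α i) ∧ (∀ i, A i ∈ M) ∧
    B = fun i j => ⨆ l, α l * A l i j}

/-- Ψ_⊗^m : set of max-products of m matrices from Ψ (Ψ_⊗^0 = {I}) -/
noncomputable def prodSet (Ψ : Set (Fin n → Fin n → ℝ)) : ℕ → Set (Fin n → Fin n → ℝ)
  | 0 => {idMat n}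
  | m + 1 => {C | ∃ A ∈ Ψ, ∃ B ∈ prodSet Ψ m, C = maxMul A B}

/-- a norm on ℝⁿ -/
structure NormOn (n : ℕ) where
  f : (Fin n → ℝ) → ℝ
  eq_zero : ∀ x, f x = 0 ↔ x = 0
  smul : ∀ (a : ℝ) (x : Fin n → ℝ), f (a • x) = |a| * f x
  add : ∀ x y : Fin n → ℝ, f (x + y) ≤ f x + f y

/-- a norm is monotone if |x| ≤ |y| entrywise implies ν(x) ≤ ν(y) -/
def NormOn.Mono (N : NormOn n) : Prop :=
  ∀ x y : Fin n → ℝ, (∀ i, |x i| ≤ |y i|) → N.f x ≤ N.f y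

/-- max-induced matrix norm η_‖·‖(A) = sup{‖A ⊗ x‖/‖x‖ : x ∈ ℝ₊ⁿ, x ≠ 0} -/
noncomputable def eta (N : NormOn n) (A : Fin n → Fin n → ℝ) : ℝ :=
  ⨆ x : {x : Fin n → ℝ // (∀ i, 0 ≤ x i) ∧ x ≠ 0}, N.f (maxVec A x.1) / N.f x.1

end MaxAlg

namespace MaxAlg
/-- the max-product A (k-1) ⊗ ⋯ ⊗ A 0 of a tuple of matrices -/
noncomputable def prodTuple {n k : ℕ} (f : Fin k → (Fin n → Fin n → ℝ)) :
    Fin n → Fin n → ℝ :=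
  (List.ofFn f).foldr maxMul (idMat n)

section Lemmas
variable {n : ℕ}

lemma bddR {ι : Sort*} [Finite ι] (f : ι → ℝ) : BddAbove (Set.range f) :=
  (Set.finite_range f).bddAbove

lemma le_mu (A : Fin n → Fin n → ℝ) {L : ℕ} (hLn : L + 1 ≤ n)
    (c : Fin (L + 1) → Fin n) (hc : Function.Injective c) :
    (∏ j : Fin (L + 1), A (c j) (c (j + 1))) ^ ((1:ℝ)/((L:ℝ)+1)) ≤ mu A := by
  have hk : L < n := by omega
  rw [mu]
  refine le_trans ?_ (le_ciSup (bddR _) (⟨L, hk⟩ : Fin n))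
  exact le_ciSup (bddR (fun c' : {f : Fin (L + 1) → Fin n // Function.Injective f} =>
    (∏ j : Fin (L + 1), A (c'.1 j) (c'.1 (j + 1))) ^ ((1 : ℝ) / ((L : ℝ) + 1)))) ⟨c, hc⟩

lemma mu_le (A : Fin n → Fin n → ℝ) {r : ℝ} (hr : 0 ≤ r)
    (h : ∀ (k : Fin n) (c : {f : Fin (k.1 + 1) → Fin n // Function.Injective f}),
      (∏ j : Fin (k.1 + 1), A (c.1 j) (c.1 (j + 1))) ^ ((1 : ℝ) / ((k.1 : ℝ) + 1)) ≤ r) :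
    mu A ≤ r :=
  Real.iSup_le (fun k => Real.iSup_le (h k) hr) hr

lemma mu_nonneg (hn : 0 < n) (A : Fin n → Fin n → ℝ) (hA : ∀ i j, 0 ≤ A i j) :
    0 ≤ mu A := by
  have i0 : Fin n := ⟨0, hn⟩
  have := le_mu A (L := 0) hn (fun _ => i0) (fun a b _ => Fin.ext (by omega))
  refine le_trans ?_ this
  exact Real.rpow_nonneg (Finset.prod_nonneg fun j _ => hA _ _) _

/-- mu is attained by some simple cycle -/
lemma mu_exists (hn : 0 < n) (A : Fin n → Fin n → ℝ) (hA : ∀ i j, 0 ≤ A i j) :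
    ∃ (L : ℕ), L + 1 ≤ n ∧ ∃ c : Fin (L + 1) → Fin n, Function.Injective c ∧
      mu A = (∏ j : Fin (L + 1), A (c j) (c (j + 1))) ^ ((1:ℝ)/((L:ℝ)+1)) := by
  rcases eq_or_lt_of_le (mu_nonneg hn A hA) with h0 | hpos
  · -- mu A = 0 : constant cycle of length 1
    have i0 : Fin n := ⟨0, hn⟩
    refine ⟨0, hn, fun _ => i0, fun a b _ => Fin.ext (by omega), ?_⟩
    have h1 := le_mu A (L := 0) hn (fun _ => i0) (fun a b _ => Fin.ext (by omega))
    have h2 : (0:ℝ) ≤ (∏ j : Fin (0 + 1), A i0 i0) ^ ((1:ℝ)/((0:ℕ):ℝ)+1) :=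
      Real.rpow_nonneg (Finset.prod_nonneg fun j _ => hA _ _) _
    refine le_antisymm ?_ ?_
    · rw [← h0]; exact Real.rpow_nonneg (Finset.prod_nonneg fun j _ => hA _ _) _
    · rw [← h0] at h1 ⊢; exact h1
  · -- mu A > 0 : sup attained
    haveI : Nonempty (Fin n) := ⟨⟨0, hn⟩⟩
    set g : Fin n → ℝ := fun k =>
      ⨆ c : {f : Fin (k.1 + 1) → Fin n // Function.Injective f},
        (∏ j : Fin (k.1 + 1), A (c.1 j) (c.1 (j + 1))) ^ ((1 : ℝ) / ((k.1 : ℝ) + 1))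
      with hg
    obtain ⟨k, hk⟩ := Finite.exists_max g
    have hmug : mu A = g k := by
      refine le_antisymm (ciSup_le hk) (le_ciSup (bddR g) k)
    by_cases hne : Nonempty {f : Fin (k.1 + 1) → Fin n // Function.Injective f}
    · obtain ⟨c, hcm⟩ := Finite.exists_max (fun c : {f : Fin (k.1 + 1) → Fin n // Function.Injective f} =>
        (∏ j : Fin (k.1 + 1), A (c.1 j) (c.1 (j + 1))) ^ ((1 : ℝ) / ((k.1 : ℝ) + 1)))
      refine ⟨k.1, k.2, c.1, c.2, ?_⟩
      have hgk : g k = ⨆ c : {f : Fin (k.1 + 1) → Fin n // Function.Injective f},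
          (∏ j : Fin (k.1 + 1), A (c.1 j) (c.1 (j + 1))) ^ ((1 : ℝ) / ((k.1 : ℝ) + 1)) := rfl
      rw [hmug, hgk]
      refine le_antisymm (ciSup_le hcm) (le_ciSup (f := fun c : {f : Fin (k.1 + 1) → Fin n // Function.Injective f} =>
        (∏ j : Fin (k.1 + 1), A (c.1 j) (c.1 (j + 1))) ^ ((1 : ℝ) / ((k.1 : ℝ) + 1))) (bddR _) c)
    · exfalso
      have : g k = 0 := by
        rw [hg]
        haveI : IsEmpty {f : Fin (k.1 + 1) → Fin n // Function.Injective f} :=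
          not_nonempty_iff.mp hne
        exact Real.iSup_of_isEmpty _
      rw [hmug, this] at hpos; exact lt_irrefl _ hpos

end Lemmas
section WalkSplit
variable {n : ℕ}

/-- auxiliary: split a closed walk at a repeated vertex a < b -/
lemma walk_split (A : Fin n → Fin n → ℝ) (hA : ∀ i j, 0 ≤ A i j) (L : ℕ)
    (IH : ∀ m, m < L → 1 ≤ m → ∀ w : ℕ → Fin n, w m = w 0 →
      ∏ j ∈ Finset.range m, A (w j) (w (j + 1)) ≤ (mu A) ^ m)
    (hL1 : 1 ≤ L) (w : ℕ → Fin n) (hw : w L = w 0)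
    (a b : ℕ) (ha : a < L) (hb : b < L) (hab : w a = w b) (hlt : a < b) :
    ∏ j ∈ Finset.range L, A (w j) (w (j + 1)) ≤ (mu A) ^ L := by
  have hn : 0 < n := (w 0).pos
  set d := b - a with hd
  have hd1 : 1 ≤ d := by omega
  have hdL : d < L := by omega
  have hLd1 : 1 ≤ L - d := by omega
  have hLdL : L - d < L := by omega
  -- inner walk
  have hinner := IH d hdL hd1 (fun t => w (a + t))
    (show w (a + d) = w (a + 0) by
      rw [show a + d = b by omega, show a + 0 = a from rfl]; exact hab.symm)
  -- outer walk
  set w2 : ℕ → Fin n := fun t => if t < a then w t else w (t + d) with hw2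
  have hw20 : w2 0 = w 0 := by
    rw [hw2]
    by_cases h0 : 0 < a
    · simp [h0]
    · have ha0 : a = 0 := by omega
      simp only [if_neg (by omega : ¬ (0 < a))]
      rw [show 0 + d = b by omega]
      rw [← hab, ha0]
  have houter := IH (L - d) hLdL hLd1 w2
    (show w2 (L - d) = w2 0 by
      rw [hw20, hw2]
      simp only
      rw [if_neg (by omega : ¬ (L - d < a)), show L - d + d = L by omega, hw])
  -- product splitting
  have key : ∏ j ∈ Finset.range L, A (w j) (w (j + 1)) =
      (∏ j ∈ Finset.range (L - d), A (w2 j) (w2 (j + 1))) *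
        (∏ j ∈ Finset.range d, A (w (a + j)) (w (a + j + 1))) := by
    have e1 : ∏ j ∈ Finset.range a, A (w2 j) (w2 (j + 1))
        = ∏ j ∈ Finset.range a, A (w j) (w (j + 1)) := by
      refine Finset.prod_congr rfl fun t ht => ?_
      rw [Finset.mem_range] at ht
      have h1 : w2 t = w t := by rw [hw2]; exact if_pos ht
      have h2 : w2 (t + 1) = w (t + 1) := by
        rw [hw2]
        by_cases h : t + 1 < a
        · exact if_pos h
        · have hta : t + 1 = a := by omega
          simp only [if_neg h]
          rw [show t + 1 + d = b by omega, ← hab, hta]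
      rw [h1, h2]
    have e2 : ∏ j ∈ Finset.range (L - b), A (w2 (a + j)) (w2 (a + j + 1))
        = ∏ j ∈ Finset.range (L - b), A (w (a + d + j)) (w (a + d + j + 1)) := by
      refine Finset.prod_congr rfl fun t ht => ?_
      have h1 : w2 (a + t) = w (a + d + t) := by
        rw [hw2]
        simp only [if_neg (by omega : ¬ (a + t < a))]
        congr 1; omega
      have h2 : w2 (a + t + 1) = w (a + d + t + 1) := by
        rw [hw2]
        simp only [if_neg (by omega : ¬ (a + t + 1 < a))]
        congr 1; omega
      rw [h1, h2]
    have hsplit : ∏ j ∈ Finset.range L, A (w j) (w (j + 1))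
        = (∏ j ∈ Finset.range a, A (w j) (w (j + 1))) *
          ((∏ j ∈ Finset.range d, A (w (a + j)) (w (a + j + 1))) *
            (∏ j ∈ Finset.range (L - b), A (w (a + d + j)) (w (a + d + j + 1)))) := by
      have e : L = a + (d + (L - b)) := by omega
      calc ∏ j ∈ Finset.range L, A (w j) (w (j + 1))
          = ∏ j ∈ Finset.range (a + (d + (L - b))), A (w j) (w (j + 1)) := by rw [← e]
        _ = (∏ j ∈ Finset.range a, A (w j) (w (j + 1))) *
            ((∏ j ∈ Finset.range d, A (w (a + j)) (w (a + j + 1))) *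
              (∏ j ∈ Finset.range (L - b), A (w (a + (d + j))) (w (a + (d + j) + 1)))) := by
            rw [Finset.prod_range_add, Finset.prod_range_add]
        _ = (∏ j ∈ Finset.range a, A (w j) (w (j + 1))) *
            ((∏ j ∈ Finset.range d, A (w (a + j)) (w (a + j + 1))) *
              (∏ j ∈ Finset.range (L - b), A (w (a + d + j)) (w (a + d + j + 1)))) := by
            congr 1
            congr 1
            refine Finset.prod_congr rfl fun t ht => ?_
            refine congrArg₂ A ?_ ?_ <;> exact congrArg w (by omega)
    have hsplit2 : ∏ j ∈ Finset.range (L - d), A (w2 j) (w2 (j + 1))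
        = (∏ j ∈ Finset.range a, A (w2 j) (w2 (j + 1))) *
          (∏ j ∈ Finset.range (L - b), A (w2 (a + j)) (w2 (a + j + 1))) := by
      rw [show L - d = a + (L - b) by omega, Finset.prod_range_add]
    rw [hsplit, hsplit2, e1, e2]; ring
  rw [key]
  have hmu0 : 0 ≤ mu A := mu_nonneg hn A hA
  calc (∏ j ∈ Finset.range (L - d), A (w2 j) (w2 (j + 1))) *
        (∏ j ∈ Finset.range d, A (w (a + j)) (w (a + j + 1)))
      ≤ (mu A) ^ (L - d) * (mu A) ^ d := by
        refine mul_le_mul houter hinner (Finset.prod_nonneg fun j _ => hA _ _)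
          (pow_nonneg hmu0 _)
    _ = (mu A) ^ L := by rw [← pow_add]; congr 1; omega
end WalkSplit
section Walk
variable {n : ℕ}

/-- every closed walk of length L has weight at most (mu A)^L -/
lemma walk_le (A : Fin n → Fin n → ℝ) (hA : ∀ i j, 0 ≤ A i j) :
    ∀ L : ℕ, 1 ≤ L → ∀ w : ℕ → Fin n, w L = w 0 →
      ∏ j ∈ Finset.range L, A (w j) (w (j + 1)) ≤ (mu A) ^ L := by
  intro L
  induction L using Nat.strong_induction_on with
  | _ L IH =>
  intro hL1 w hw
  have hn : 0 < n := (w 0).pos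
  by_cases hinj : ∀ a b, a < L → b < L → w a = w b → a = b
  · -- the walk is a simple cycle
    obtain ⟨L', rfl⟩ : ∃ L', L = L' + 1 := ⟨L - 1, by omega⟩
    set c : Fin (L' + 1) → Fin n := fun j => w j.1 with hc
    have hcinj : Function.Injective c := fun a b hab => Fin.ext (hinj a.1 b.1 a.2 b.2 hab)
    have hLn : L' + 1 ≤ n := by
      have := Fintype.card_le_of_injective c hcinj
      simpa using this
    have hprod : ∏ j : Fin (L' + 1), A (c j) (c (j + 1))
        = ∏ j ∈ Finset.range (L' + 1), A (w j) (w (j + 1)) := by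
      rw [← Fin.prod_univ_eq_prod_range (fun t => A (w t) (w (t + 1))) (L' + 1)]
      refine Finset.prod_congr rfl fun j _ => ?_
      have h1 : (j + 1 : Fin (L' + 1)).1 = (j.1 + 1) % (L' + 1) := by
        simp [Fin.add_def]
      show A (c j) (c (j + 1)) = A (w j.1) (w (j.1 + 1))
      rw [hc]
      simp only [h1]
      by_cases hj : j.1 + 1 < L' + 1
      · rw [Nat.mod_eq_of_lt hj]
      · have hj' : j.1 + 1 = L' + 1 := by omega
        have h0 : (j.1 + 1) % (L' + 1) = 0 := by rw [hj']; exact Nat.mod_self _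
        rw [h0, hj', hw]
    have hW0 : 0 ≤ ∏ j ∈ Finset.range (L' + 1), A (w j) (w (j + 1)) :=
      Finset.prod_nonneg fun j _ => hA _ _
    have hle := le_mu A hLn c hcinj
    rw [hprod] at hle
    set W := ∏ j ∈ Finset.range (L' + 1), A (w j) (w (j + 1)) with hWdef
    have hcast : ((1:ℝ)/((L':ℝ)+1)) = ((L' + 1 : ℕ) : ℝ)⁻¹ := by push_cast; ring
    have hWeq : (W ^ ((1:ℝ)/((L':ℝ)+1))) ^ (L' + 1) = W := by
      rw [hcast]; exact Real.rpow_inv_natCast_pow hW0 (by omega)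
    calc W = (W ^ ((1:ℝ)/((L':ℝ)+1))) ^ (L' + 1) := hWeq.symm
      _ ≤ (mu A) ^ (L' + 1) := pow_le_pow_left₀ (Real.rpow_nonneg hW0 _) hle _
  · -- split the walk at a repeated vertex
    push_neg at hinj
    obtain ⟨a, b, ha, hb, hab, hne⟩ := hinj
    rcases Nat.lt_or_ge a b with hlt | hge
    case _ =>
      exact walk_split A hA L IH hL1 w hw a b ha hb hab hlt
    case _ =>
      have hlt : b < a := by omega
      exact walk_split A hA L IH hL1 w hw b a hb ha hab.symm hlt

end Walk
section Prod
variable {n : ℕ}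

lemma prodTuple_zero (f : Fin 0 → (Fin n → Fin n → ℝ)) : prodTuple f = idMat n := by
  rw [prodTuple, List.ofFn_zero, List.foldr_nil]

lemma prodTuple_succ {L : ℕ} (f : Fin (L + 1) → (Fin n → Fin n → ℝ)) :
    prodTuple f = maxMul (f 0) (prodTuple (fun i => f i.succ)) := by
  rw [prodTuple, List.ofFn_succ, List.foldr_cons]; rfl

lemma maxMul_nonneg {A B : Fin n → Fin n → ℝ} (hA : ∀ i j, 0 ≤ A i j)
    (hB : ∀ i j, 0 ≤ B i j) : ∀ i j, 0 ≤ maxMul A B i j := fun i j =>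
  Real.iSup_nonneg fun k => mul_nonneg (hA i k) (hB k j)

lemma prodTuple_nonneg : ∀ {L : ℕ} (f : Fin L → (Fin n → Fin n → ℝ)),
    (∀ t i j, 0 ≤ f t i j) → ∀ i j, 0 ≤ prodTuple f i j := by
  intro L
  induction L with
  | zero =>
    intro f hf i j
    rw [prodTuple_zero]
    simp only [idMat]
    split <;> norm_num
  | succ L ih =>
    intro f hf
    rw [prodTuple_succ]
    exact maxMul_nonneg (fun i j => hf 0 i j) (ih _ fun t i j => hf t.succ i j)

/-- lower bound: any path gives a lower bound on the corresponding entry -/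
lemma le_prodTuple_path : ∀ {L : ℕ} (f : Fin L → (Fin n → Fin n → ℝ)),
    (∀ t i j, 0 ≤ f t i j) → ∀ p : Fin (L + 1) → Fin n,
    (∏ j : Fin L, f j (p j.castSucc) (p j.succ)) ≤ prodTuple f (p 0) (p (Fin.last L)) := by
  intro L
  induction L with
  | zero =>
    intro f hf p
    rw [prodTuple_zero]
    have : (Fin.last 0) = (0 : Fin 1) := rfl
    rw [this]
    simp [idMat]
  | succ L ih =>
    intro f hf p
    rw [prodTuple_succ, Fin.prod_univ_succ]
    have h2 := ih (fun t => f t.succ) (fun t i j => hf t.succ i j) (p ∘ Fin.succ)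
    have h1 : ∏ j : Fin L, f j.succ (p j.succ.castSucc) (p j.succ.succ)
        = ∏ j : Fin L, (fun t => f t.succ) j ((p ∘ Fin.succ) j.castSucc) ((p ∘ Fin.succ) j.succ) := by
      refine Finset.prod_congr rfl fun j _ => ?_
      simp only [Function.comp_apply]
      rw [← Fin.succ_castSucc]
    have hlast : (p ∘ Fin.succ) (Fin.last L) = p (Fin.last (L + 1)) := by
      simp only [Function.comp_apply, Fin.succ_last]
    rw [hlast] at h2
    rw [← h1] at h2
    have step : f 0 (p (0 : Fin (L+1)).castSucc) (p (0 : Fin (L+1)).succ) *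
          ∏ j : Fin L, f j.succ (p j.succ.castSucc) (p j.succ.succ)
        ≤ f 0 (p 0) ((p ∘ Fin.succ) 0) *
          prodTuple (fun t => f t.succ) ((p ∘ Fin.succ) 0) (p (Fin.last (L + 1))) := by
      rw [Fin.castSucc_zero]
      exact mul_le_mul_of_nonneg_left h2 (hf 0 _ _)
    refine le_trans step ?_
    exact le_ciSup (f := fun m => f 0 (p 0) m *
      prodTuple (fun t => f t.succ) m (p (Fin.last (L + 1)))) (bddR _) ((p ∘ Fin.succ) 0)

/-- upper bound: each entry is at most the weight of some path (or ≤ 0) -/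
lemma prodTuple_path_exists (hn : 0 < n) : ∀ {L : ℕ} (f : Fin L → (Fin n → Fin n → ℝ)),
    (∀ t i j, 0 ≤ f t i j) → ∀ a b : Fin n,
    prodTuple f a b ≤ 0 ∨ ∃ p : Fin (L + 1) → Fin n, p 0 = a ∧ p (Fin.last L) = b ∧
      prodTuple f a b ≤ ∏ j : Fin L, f j (p j.castSucc) (p j.succ) := by
  haveI : Nonempty (Fin n) := ⟨⟨0, hn⟩⟩
  intro L
  induction L with
  | zero =>
    intro f hf a b
    by_cases hab : a = b
    · subst hab
      right
      exact ⟨fun _ => a, rfl, rfl, by rw [prodTuple_zero]; simp [idMat]⟩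
    · left
      rw [prodTuple_zero]; simp [idMat, hab]
  | succ L ih =>
    intro f hf a b
    rw [prodTuple_succ]
    obtain ⟨m, hm⟩ := Finite.exists_max
      (fun m => f 0 a m * prodTuple (fun i => f i.succ) m b)
    have hsup : maxMul (f 0) (prodTuple fun i => f i.succ) a b
        ≤ f 0 a m * prodTuple (fun i => f i.succ) m b := ciSup_le hm
    rcases ih (fun i => f i.succ) (fun t i j => hf t.succ i j) m b with h0 | ⟨p', hp0, hpl, hple⟩
    · left
      exact le_trans hsup (mul_nonpos_of_nonneg_of_nonpos (hf 0 a m) h0)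
    · right
      refine ⟨Fin.cons a p', Fin.cons_zero _ _, ?_, ?_⟩
      · rw [← Fin.succ_last, Fin.cons_succ]; exact hpl
      · refine le_trans hsup ?_
        rw [Fin.prod_univ_succ]
        simp only [Fin.castSucc_zero, Fin.cons_zero, ← Fin.succ_castSucc, Fin.cons_succ, hp0]
        exact mul_le_mul_of_nonneg_left hple (hf 0 a m)

end Prod
section Main
variable {n : ℕ}

lemma prod_range_mul {M : Type*} [CommMonoid M] (g : ℕ → M) (m Lp : ℕ) :
    ∏ s ∈ Finset.range (m * Lp), g s
      = ∏ j ∈ Finset.range m, ∏ r ∈ Finset.range Lp, g (Lp * j + r) := by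
  induction m with
  | zero => simp
  | succ m ih =>
    rw [Nat.succ_mul, Finset.prod_range_add, ih, Finset.prod_range_succ]
    congr 1
    refine Finset.prod_congr rfl fun r _ => ?_
    congr 1
    ring

lemma Ssup_spec (Ψ : Set (Fin n → Fin n → ℝ)) (hc : IsCompact Ψ) (hne : Ψ.Nonempty)
    (i j : Fin n) : ∃ B ∈ Ψ, B i j = Ssup Ψ i j := by
  have hcont : Continuous (fun A : Fin n → Fin n → ℝ => A i j) :=
    (continuous_apply j).comp (continuous_apply i)
  have himg : IsCompact ((fun A : Fin n → Fin n → ℝ => A i j) '' Ψ) := hc.image hcont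
  obtain ⟨B, hB, hBe⟩ := himg.sSup_mem (hne.image _)
  exact ⟨B, hB, hBe⟩

lemma le_Ssup (Ψ : Set (Fin n → Fin n → ℝ)) (hc : IsCompact Ψ)
    {A : Fin n → Fin n → ℝ} (hA : A ∈ Ψ) (i j : Fin n) : A i j ≤ Ssup Ψ i j := by
  have hcont : Continuous (fun A : Fin n → Fin n → ℝ => A i j) :=
    (continuous_apply j).comp (continuous_apply i)
  exact le_csSup (hc.image hcont).bddAbove ⟨A, hA, rfl⟩

end Main
section Upper
variable {n : ℕ}

lemma cycle_walk_bound (hn : 0 < n) {L m : ℕ} (S : Fin n → Fin n → ℝ)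
    (hS0 : ∀ i j, 0 ≤ S i j) (F : Fin (L + 1) → (Fin n → Fin n → ℝ))
    (hFnn : ∀ t i j, 0 ≤ F t i j) (hFS : ∀ t i j, F t i j ≤ S i j)
    (cy : Fin (m + 1) → Fin n) :
    (∏ j : Fin (m + 1), prodTuple F (cy j) (cy (j + 1)))
      ≤ ((mu S) ^ (L + 1)) ^ (m + 1) := by
  have hPnn : ∀ i j, 0 ≤ prodTuple F i j := prodTuple_nonneg F hFnn
  have hmuS0 : 0 ≤ mu S := mu_nonneg hn S hS0
  have hm0 : 0 < m + 1 := Nat.succ_pos _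
  by_cases hz : ∃ j : Fin (m + 1), prodTuple F (cy j) (cy (j + 1)) ≤ 0
  · obtain ⟨j, hj⟩ := hz
    have h0 : (∏ j : Fin (m + 1), prodTuple F (cy j) (cy (j + 1))) = 0 :=
      Finset.prod_eq_zero (Finset.mem_univ j) (le_antisymm hj (hPnn _ _))
    rw [h0]
    exact pow_nonneg (pow_nonneg hmuS0 _) _
  · push_neg at hz
    have hall : ∀ j : Fin (m + 1), ∃ p : Fin (L + 2) → Fin n, p 0 = cy j ∧
        p (Fin.last (L + 1)) = cy (j + 1) ∧
        prodTuple F (cy j) (cy (j + 1))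
          ≤ ∏ t : Fin (L + 1), F t (p t.castSucc) (p t.succ) := by
      intro j
      rcases prodTuple_path_exists hn F hFnn (cy j) (cy (j + 1)) with h0 | h
      · exact absurd (lt_of_lt_of_le (hz j) h0) (lt_irrefl 0)
      · exact h
    choose q hq0 hql hqle using hall
    set w : ℕ → Fin n := fun s =>
      q ⟨(s / (L + 1)) % (m + 1), Nat.mod_lt _ hm0⟩
        ⟨s % (L + 1), lt_of_lt_of_le (Nat.mod_lt _ (by omega)) (by omega)⟩ with hw
    have hwval : ∀ (j r : ℕ), r < L + 2 →
        w ((L + 1) * j + r) = q ⟨(j + r / (L + 1)) % (m + 1), Nat.mod_lt _ hm0⟩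
          ⟨r % (L + 1), lt_of_lt_of_le (Nat.mod_lt _ (by omega)) (by omega)⟩ := by
      intro j r _
      have e1 : ((L + 1) * j + r) / (L + 1) = j + r / (L + 1) :=
        Nat.mul_add_div (by omega) _ _
      have e2 : ((L + 1) * j + r) % (L + 1) = r % (L + 1) := Nat.mul_add_mod _ _ _
      simp only [hw, e1, e2]
    have hclose : w ((m + 1) * (L + 1)) = w 0 := by
      have d1 : ((m + 1) * (L + 1)) / (L + 1) = m + 1 := Nat.mul_div_cancel _ (by omega)
      have d2 : ((m + 1) * (L + 1)) % (L + 1) = 0 := Nat.mul_mod_left _ _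
      simp only [hw, d1, d2, Nat.mod_self, Nat.zero_div, Nat.zero_mod]
    have hwalk := walk_le S hS0 ((m + 1) * (L + 1)) (by
      have := Nat.mul_pos hm0 (by omega : 0 < L + 1); omega) w hclose
    have hsplit := prod_range_mul (fun s => S (w s) (w (s + 1))) (m + 1) (L + 1)
    have hseg : ∀ j : Fin (m + 1),
        ∏ r ∈ Finset.range (L + 1), S (w ((L + 1) * j.1 + r)) (w ((L + 1) * j.1 + r + 1))
          = ∏ t : Fin (L + 1), S (q j t.castSucc) (q j t.succ) := by
      intro j
      rw [← Fin.prod_univ_eq_prod_range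
        (fun r => S (w ((L + 1) * j.1 + r)) (w ((L + 1) * j.1 + r + 1))) (L + 1)]
      refine Finset.prod_congr rfl fun t _ => ?_
      have ht1 : t.1 < L + 1 := t.2
      have h1 : w ((L + 1) * j.1 + t.1) = q j t.castSucc := by
        rw [hwval j.1 t.1 (by omega)]
        refine congrArg₂ q (Fin.ext ?_) (Fin.ext ?_)
        · show (j.1 + t.1 / (L + 1)) % (m + 1) = j.1
          rw [Nat.div_eq_of_lt ht1, Nat.add_zero]
          exact Nat.mod_eq_of_lt j.2
        · show t.1 % (L + 1) = t.castSucc.1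
          rw [Nat.mod_eq_of_lt ht1, Fin.coe_castSucc]
      have h2 : w ((L + 1) * j.1 + t.1 + 1) = q j t.succ := by
        by_cases hts : t.1 + 1 < L + 1
        · rw [show (L + 1) * j.1 + t.1 + 1 = (L + 1) * j.1 + (t.1 + 1) from rfl,
            hwval j.1 (t.1 + 1) (by omega)]
          refine congrArg₂ q (Fin.ext ?_) (Fin.ext ?_)
          · show (j.1 + (t.1 + 1) / (L + 1)) % (m + 1) = j.1
            rw [Nat.div_eq_of_lt hts, Nat.add_zero]
            exact Nat.mod_eq_of_lt j.2
          · show (t.1 + 1) % (L + 1) = t.succ.1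
            rw [Nat.mod_eq_of_lt hts, Fin.val_succ]
        · have hts' : t.1 + 1 = L + 1 := by omega
          have hrw : (L + 1) * (j.1 + 1) + 0 = (L + 1) * j.1 + t.1 + 1 := by
            rw [Nat.mul_add, Nat.mul_one]; omega
          have hlastq : q j t.succ = cy (j + 1) := by
            have hle : t.succ = Fin.last (L + 1) := Fin.ext (by rw [Fin.val_succ, hts']; rfl)
            rw [hle]; exact hql j
          have hstep := hwval (j.1 + 1) 0 (by omega)
          rw [hrw] at hstep
          calc w ((L + 1) * j.1 + t.1 + 1)
              = q ⟨(j.1 + 1 + 0 / (L + 1)) % (m + 1), Nat.mod_lt _ hm0⟩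
                ⟨0 % (L + 1), lt_of_lt_of_le (Nat.mod_lt _ (by omega)) (by omega)⟩ := hstep
            _ = q (j + 1) 0 := congrArg₂ q
                (Fin.ext (by simp [Fin.add_def])) (Fin.ext (by simp))
            _ = cy (j + 1) := hq0 _
            _ = q j t.succ := hlastq.symm
      rw [h1, h2]
    have chain : (∏ j : Fin (m + 1), prodTuple F (cy j) (cy (j + 1)))
        ≤ ∏ j : Fin (m + 1), ∏ t : Fin (L + 1), S (q j t.castSucc) (q j t.succ) := by
      refine Finset.prod_le_prod (fun j _ => hPnn _ _) fun j _ => ?_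
      exact le_trans (hqle j)
        (Finset.prod_le_prod (fun t _ => hFnn _ _ _) fun t _ => hFS _ _ _)
    have eq2 : ∏ s ∈ Finset.range ((m + 1) * (L + 1)), S (w s) (w (s + 1))
        = ∏ j : Fin (m + 1), ∏ t : Fin (L + 1), S (q j t.castSucc) (q j t.succ) := by
      rw [hsplit, ← Fin.prod_univ_eq_prod_range
        (fun j => ∏ r ∈ Finset.range (L + 1),
          S (w ((L + 1) * j + r)) (w ((L + 1) * j + r + 1))) (m + 1)]
      exact Finset.prod_congr rfl fun j _ => hseg j
    calc (∏ j : Fin (m + 1), prodTuple F (cy j) (cy (j + 1)))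
        ≤ ∏ j : Fin (m + 1), ∏ t : Fin (L + 1), S (q j t.castSucc) (q j t.succ) := chain
      _ = ∏ s ∈ Finset.range ((m + 1) * (L + 1)), S (w s) (w (s + 1)) := eq2.symm
      _ ≤ (mu S) ^ ((m + 1) * (L + 1)) := hwalk
      _ = ((mu S) ^ (L + 1)) ^ (m + 1) := by rw [← pow_mul, Nat.mul_comm]

lemma mu_prodTuple_le (hn : 0 < n) {L : ℕ} (S : Fin n → Fin n → ℝ)
    (hS0 : ∀ i j, 0 ≤ S i j) (F : Fin (L + 1) → (Fin n → Fin n → ℝ))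
    (hFnn : ∀ t i j, 0 ≤ F t i j) (hFS : ∀ t i j, F t i j ≤ S i j) :
    mu (prodTuple F) ≤ (mu S) ^ (L + 1) := by
  have hPnn : ∀ i j, 0 ≤ prodTuple F i j := prodTuple_nonneg F hFnn
  have hmuS0 : 0 ≤ mu S := mu_nonneg hn S hS0
  refine mu_le _ (pow_nonneg hmuS0 _) ?_
  intro k c
  have key := cycle_walk_bound hn S hS0 F hFnn hFS (m := k.1) c.1
  have hCW0 : 0 ≤ ∏ j : Fin (k.1 + 1), prodTuple F (c.1 j) (c.1 (j + 1)) :=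
    Finset.prod_nonneg fun _ _ => hPnn _ _
  have hexp : ((1:ℝ) / ((k.1 : ℝ) + 1)) = (((k.1 + 1 : ℕ)) : ℝ)⁻¹ := by push_cast; ring
  rw [hexp]
  calc (∏ j : Fin (k.1 + 1), prodTuple F (c.1 j) (c.1 (j + 1))) ^ (((k.1 + 1 : ℕ)) : ℝ)⁻¹
      ≤ (((mu S) ^ (L + 1)) ^ (k.1 + 1)) ^ (((k.1 + 1 : ℕ)) : ℝ)⁻¹ :=
        Real.rpow_le_rpow hCW0 key (by positivity)
    _ = (mu S) ^ (L + 1) := Real.pow_rpow_inv_natCast (pow_nonneg hmuS0 _) (by omega)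

end Upper

/-- finiteness property: μ(Ψ) is attained by a product of
length at most n. -/
theorem finiteness_property {n : ℕ} (hn : 0 < n) (Ψ : Set (Fin n → Fin n → ℝ))
    (hc : IsCompact Ψ) (hne : Ψ.Nonempty) (hΨ : ∀ A ∈ Ψ, ∀ i j, 0 ≤ A i j) :
    ∃ k : ℕ, 1 ≤ k ∧ k ≤ n ∧ ∃ f : Fin k → (Fin n → Fin n → ℝ),
      (∀ i, f i ∈ Ψ) ∧ muSet Ψ = (mu (prodTuple f)) ^ ((1 : ℝ) / (k : ℝ)) := by
  have hS0 : ∀ i j, 0 ≤ Ssup Ψ i j := fun i j => by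
    obtain ⟨B, hB, hBe⟩ := Ssup_spec Ψ hc hne i j
    rw [← hBe]; exact hΨ B hB i j
  obtain ⟨L, hLn, c, hcinj, hmu⟩ := mu_exists hn (Ssup Ψ) hS0
  have hch : ∀ j : Fin (L + 1), ∃ B ∈ Ψ, B (c j) (c (j + 1)) = Ssup Ψ (c j) (c (j + 1)) :=
    fun j => Ssup_spec Ψ hc hne _ _
  choose F hF hFe using hch
  refine ⟨L + 1, by omega, hLn, F, hF, ?_⟩
  have hFnn : ∀ t i j, 0 ≤ F t i j := fun t => hΨ _ (hF t)
  have hFS : ∀ t i j, F t i j ≤ Ssup Ψ i j := fun t i j => le_Ssup Ψ hc (hF t) i j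
  have hmuS0 : 0 ≤ mu (Ssup Ψ) := mu_nonneg hn _ hS0
  have hW0 : 0 ≤ ∏ j : Fin (L + 1), Ssup Ψ (c j) (c (j + 1)) :=
    Finset.prod_nonneg fun _ _ => hS0 _ _
  have hup := mu_prodTuple_le hn (Ssup Ψ) hS0 F hFnn hFS
  have hWeq : (∏ j : Fin (L + 1), Ssup Ψ (c j) (c (j + 1))) = (mu (Ssup Ψ)) ^ (L + 1) := by
    rw [hmu, show ((1:ℝ) / ((L:ℝ) + 1)) = (((L + 1 : ℕ)) : ℝ)⁻¹ by push_cast; ring]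
    exact (Real.rpow_inv_natCast_pow hW0 (by omega)).symm
  -- lower bound: the cycle c gives a lower bound on mu (prodTuple F)
  have hlow : (∏ j : Fin (L + 1), Ssup Ψ (c j) (c (j + 1))) ≤ mu (prodTuple F) := by
    set p : Fin (L + 2) → Fin n :=
      fun t => c ⟨t.1 % (L + 1), Nat.mod_lt _ (by omega)⟩ with hp
    have hedge : ∀ j : Fin (L + 1),
        F j (p j.castSucc) (p j.succ) = Ssup Ψ (c j) (c (j + 1)) := by
      intro j
      have e1 : p j.castSucc = c j := by
        simp only [hp]
        exact congrArg c (Fin.ext (by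
          simp only [Fin.coe_castSucc]; exact Nat.mod_eq_of_lt j.2))
      have e2 : p j.succ = c (j + 1) := by
        simp only [hp]
        exact congrArg c (Fin.ext (by
          simp only [Fin.val_succ, Fin.add_def, Fin.val_one', Nat.add_mod_mod]))
      rw [e1, e2]; exact hFe j
    have h1 := le_prodTuple_path F hFnn p
    have hp0 : p 0 = c 0 := congrArg c (Fin.ext (by simp [hp]))
    have hpl : p (Fin.last (L + 1)) = c 0 := by
      simp only [hp]
      exact congrArg c (Fin.ext (by simp [Fin.val_last, Nat.mod_self]))
    rw [hp0, hpl] at h1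
    have h2 : (∏ j : Fin (L + 1), Ssup Ψ (c j) (c (j + 1)))
        = ∏ j : Fin (L + 1), F j (p j.castSucc) (p j.succ) :=
      (Finset.prod_congr rfl fun j _ => hedge j).symm
    have h3 := le_mu (prodTuple F) (L := 0) hn (fun _ => c 0)
      (fun a b _ => Fin.ext (by omega))
    have h4 : (∏ _j : Fin (0 + 1), prodTuple F (c 0) (c 0)) ^ ((1:ℝ)/(((0:ℕ):ℝ) + 1))
        = prodTuple F (c 0) (c 0) := by
      norm_num
    calc (∏ j : Fin (L + 1), Ssup Ψ (c j) (c (j + 1)))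
        = ∏ j : Fin (L + 1), F j (p j.castSucc) (p j.succ) := h2
      _ ≤ prodTuple F (c 0) (c 0) := h1
      _ = (∏ _j : Fin (0 + 1), prodTuple F (c 0) (c 0)) ^ ((1:ℝ)/(((0:ℕ):ℝ) + 1)) := h4.symm
      _ ≤ mu (prodTuple F) := h3
  have hmuP : mu (prodTuple F) = (mu (Ssup Ψ)) ^ (L + 1) :=
    le_antisymm hup (hWeq ▸ hlow)
  show mu (Ssup Ψ) = _
  rw [hmuP, show ((1:ℝ) / (((L + 1 : ℕ)) : ℝ)) = (((L + 1 : ℕ)) : ℝ)⁻¹ from one_div _]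
  exact (Real.pow_rpow_inv_natCast hmuS0 (by omega)).symm

end MaxAlg
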